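/- Let w₁, w₂ : ℝⁿ × ℝ → ℝ be functions, L₁ > 0, c ≠ 0, and s ∈ ℝ, such that w₁((x₁ + L₁, x₂,…,xₙ), ξ) = w₁(x, ξ) and similarly for w₂, for all x, ξ. If sup over (ξ, x₂,…,xₙ) of |w₁((ξ − c t, x₂,…,xₙ), ξ) − w₂((ξ − c t, x₂,…,xₙ), ξ + s)| → 0 as t → ∞, then w₁(x, ξ) = w₂(x, ξ + s) for all x ∈ ℝⁿ and ξ ∈ ℝ. -/

import Mathlib

/-!
Along the moving frame the first coordinate `ξ - c t` runs through all of `ℝ` as `t → ∞`, so it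
meets every class of `ℝ / L₁ ℤ` at arbitrarily late times. By periodicity in `x₁`, the
difference `w₁(x, ξ) - w₂(x, ξ + s)` at a fixed point therefore equals the sup-controlled
difference at such a late time, hence is smaller than every `ε > 0`.
-/

theorem periodic_comp_update {ι α : Type*} [DecidableEq ι] {w : (ι → ℝ) → α} (i : ι) {L : ℝ}
    (hper : ∀ x : ι → ℝ, w (Function.update x i (x i + L)) = w x) (x : ι → ℝ) :
    Function.Periodic (fun y => w (Function.update x i y)) L := fun y => by
  simpa using hper (Function.update x i y)

theorem exists_int_mul_ge {r : ℝ} (hr : r ≠ 0) (b : ℝ) : ∃ k : ℤ, b ≤ k * r := by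
  rcases hr.lt_or_gt with hneg | hpos
  · obtain ⟨k, hk⟩ := exists_int_le (b / r)
    exact ⟨k, (le_div_iff_of_neg hneg).mp hk⟩
  · obtain ⟨k, hk⟩ := exists_int_ge (b / r)
    exact ⟨k, (div_le_iff₀ hpos).mp hk⟩

theorem exists_ge_sub_mul_eq_add_int_mul {c L : ℝ} (hc : c ≠ 0) (hL : L ≠ 0) (ξ y T : ℝ) :
    ∃ t ≥ T, ∃ k : ℤ, ξ - c * t = y + k * L := by
  obtain ⟨k, hk⟩ := exists_int_mul_ge (div_ne_zero (neg_ne_zero.mpr hL) hc) (T - (ξ - y) / c)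
  refine ⟨(ξ - y - k * L) / c, ?_, k, ?_⟩
  · calc T ≤ (ξ - y) / c + k * (-L / c) := by linarith
      _ = (ξ - y - k * L) / c := by ring
  · field_simp
    ring

theorem wave_profile_uniqueness (n : ℕ) (hn : 0 < n)
    (w₁ w₂ : (Fin n → ℝ) → ℝ → ℝ)
    (L₁ : ℝ) (hL₁ : 0 < L₁) (c : ℝ) (hc : c ≠ 0) (s : ℝ)
    (hper₁ : ∀ (x : Fin n → ℝ) (ξ : ℝ),
      w₁ (Function.update x ⟨0, hn⟩ (x ⟨0, hn⟩ + L₁)) ξ = w₁ x ξ)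
    (hper₂ : ∀ (x : Fin n → ℝ) (ξ : ℝ),
      w₂ (Function.update x ⟨0, hn⟩ (x ⟨0, hn⟩ + L₁)) ξ = w₂ x ξ)
    (hconv : ∀ ε > 0, ∃ T : ℝ, ∀ t ≥ T, ∀ (x : Fin n → ℝ) (ξ : ℝ),
      |w₁ (Function.update x ⟨0, hn⟩ (ξ - c * t)) ξ -
        w₂ (Function.update x ⟨0, hn⟩ (ξ - c * t)) (ξ + s)| ≤ ε) :
    ∀ (x : Fin n → ℝ) (ξ : ℝ), w₁ x ξ = w₂ x (ξ + s) := by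
  intro x ξ
  set i : Fin n := ⟨0, hn⟩
  have hperiodic₁ := periodic_comp_update i (fun x => funext (hper₁ x)) x
  have hperiodic₂ := periodic_comp_update i (fun x => funext (hper₂ x)) x
  refine eq_of_forall_dist_le fun ε hε => ?_
  obtain ⟨T, hT⟩ := hconv ε hε
  obtain ⟨t, ht, k, hk⟩ := exists_ge_sub_mul_eq_add_int_mul hc hL₁.ne' ξ (x i) T
  have hlate := hT t ht x ξ
  rwa [hk, congrFun (hperiodic₁.int_mul k (x i)), congrFun (hperiodic₂.int_mul k (x i)),
    Function.update_eq_self] at hlate
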